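/- Fixed points of Whitfield's iteration are stationary points of the true rational least-squares error: with notation as above, the Wirtinger derivative of the converged Whitfield error E_WF at w equals the Wirtinger derivative of the nonlinear least-squares error E(w) = ∑_{i=1}^{M} |r(z_i; w) − H(z_i)|² at w, i.e., both equal ∑_{i=1}^{M} (1/d(z_i;w)) (p(z_i) − r(z_i;w) q(z_i)) · conj(r(z_i;w) − H(z_i)), provided d(z_i; w) ≠ 0 for all i. -/

import Mathlib

/-!
At a fixed point `w' = w`, the scaled Whitfield residual
`(vᵀp − r(w) vᵀq + wᵀp − d(w) H) / d(w)` is an affine function of `v` that agrees with the true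
residual `r(v) − H` to first order at `w`: both take the value `r(w) − H` and have the same
ℂ-linear derivative `(p − r(w) q)ᵀ / d(w)`. For a sum of squared moduli of holomorphic functions
`gᵢ` the Wirtinger derivative is `∑ conj (gᵢ w) ∂gᵢ/∂w_j`, which only sees these first-order data.
-/

open scoped ComplexConjugate

/-- The (unconjugated) dot product on `ℂ^k`. -/
noncomputable def dotc {k : ℕ} (w v : Fin k → ℂ) : ℂ := ∑ j, w j * v j

/-- Wirtinger derivative `df/dw_j = (1/2)(∂f/∂x_j − i ∂f/∂y_j)` of a
real-valued function of `w ∈ ℂ^k`. -/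
noncomputable def wirt {k : ℕ} (f : (Fin k → ℂ) → ℝ) (w : Fin k → ℂ)
    (j : Fin k) : ℂ :=
  (1 / 2 : ℂ) * (((fderiv ℝ f w (Pi.single j 1) : ℝ) : ℂ)
    - Complex.I * ((fderiv ℝ f w (Pi.single j Complex.I) : ℝ) : ℂ))

open ContinuousLinearMap

noncomputable def dotcCLM {k : ℕ} (a : Fin k → ℂ) : (Fin k → ℂ) →L[ℂ] ℂ :=
  ∑ j, a j • proj j

@[simp]
lemma dotcCLM_apply {k : ℕ} (a v : Fin k → ℂ) : dotcCLM a v = dotc v a := by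
  simp [dotc, dotcCLM, sum_apply, mul_comm]

@[simp]
lemma dotc_single_one {k : ℕ} (a : Fin k → ℂ) (j : Fin k) : dotc (Pi.single j 1) a = a j := by
  simp [dotc, Pi.single_apply]

lemma hasFDerivAt_dotc {k : ℕ} (a w : Fin k → ℂ) :
    HasFDerivAt (fun v => dotc v a) (dotcCLM a) w := by
  convert (dotcCLM a).hasFDerivAt (x := w) with v
  exact (dotcCLM_apply a v).symm

lemma wirt_eq_half_of_hasFDerivAt_re {k : ℕ} {f : (Fin k → ℂ) → ℝ} {w : Fin k → ℂ}
    {Λ : (Fin k → ℂ) →L[ℂ] ℂ} (hf : HasFDerivAt f (Complex.reCLM.comp (Λ.restrictScalars ℝ)) w)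
    (j : Fin k) : wirt f w j = (1 / 2) * Λ (Pi.single j 1) := by
  have hI : (Pi.single j Complex.I : Fin k → ℂ) = Complex.I • Pi.single j 1 := by
    simp [← Pi.single_smul]
  rw [wirt, hf.fderiv]
  simp only [comp_apply, coe_restrictScalars', Complex.reCLM_apply, hI, map_smul, smul_eq_mul]
  congr 1
  -- `Re x − i Re (i x) = Re x + i Im x = x`
  apply Complex.ext <;> simp

lemma hasFDerivAt_sum_norm_sq {E ι : Type*} [NormedAddCommGroup E] [NormedSpace ℂ E]
    [Fintype ι] {g : ι → E → ℂ} {g' : ι → E →L[ℂ] ℂ} {w : E}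
    (hg : ∀ i, HasFDerivAt (g i) (g' i) w) :
    HasFDerivAt (fun v => ∑ i, ‖g i v‖ ^ 2)
      (Complex.reCLM.comp ((∑ i, (2 * conj (g i w)) • g' i).restrictScalars ℝ)) w := by
  refine (HasFDerivAt.fun_sum fun i _ => ((hg i).restrictScalars ℝ).norm_sq).congr_fderiv ?_
  ext v
  simp only [sum_apply, smul_apply, comp_apply, coe_restrictScalars', coe_innerSL_apply,
    Complex.inner, map_sum, Complex.reCLM_apply, nsmul_eq_mul, smul_eq_mul]
  exact Finset.sum_congr rfl fun _ _ => by
    rw [mul_comm _ (conj _), mul_assoc]; simp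

lemma wirt_sum_norm_sq {k : ℕ} {ι : Type*} [Fintype ι] {g : ι → (Fin k → ℂ) → ℂ}
    {g' : ι → (Fin k → ℂ) →L[ℂ] ℂ} {w : Fin k → ℂ} (hg : ∀ i, HasFDerivAt (g i) (g' i) w)
    (j : Fin k) :
    wirt (fun v => ∑ i, ‖g i v‖ ^ 2) w j = ∑ i, conj (g i w) * g' i (Pi.single j 1) := by
  rw [wirt_eq_half_of_hasFDerivAt_re (hasFDerivAt_sum_norm_sq hg), sum_apply, Finset.mul_sum]
  simp only [smul_apply, smul_eq_mul]
  exact Finset.sum_congr rfl fun _ _ => by ring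

noncomputable def dotcDivDeriv {k : ℕ} (a b w : Fin k → ℂ) : (Fin k → ℂ) →L[ℂ] ℂ :=
  (1 / dotc w b) • (dotcCLM a - (dotc w a / dotc w b) • dotcCLM b)

lemma dotcDivDeriv_single_one {k : ℕ} (a b w : Fin k → ℂ) (j : Fin k) :
    dotcDivDeriv a b w (Pi.single j 1) = 1 / dotc w b * (a j - dotc w a / dotc w b * b j) := by
  simp [dotcDivDeriv]

lemma hasFDerivAt_dotc_div_dotc {k : ℕ} (a b w : Fin k → ℂ) (hb : dotc w b ≠ 0) :
    HasFDerivAt (fun v => dotc v a / dotc v b) (dotcDivDeriv a b w) w := by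
  simp only [div_eq_mul_inv]
  refine ((hasFDerivAt_dotc a w).mul
    ((hasFDerivAt_inv hb).comp w (hasFDerivAt_dotc b w))).congr_fderiv ?_
  ext v
  simp only [dotcDivDeriv, add_apply, smul_apply, sub_apply, comp_apply, Function.comp_apply,
    toSpanSingleton_apply,
    dotcCLM_apply, smul_eq_mul]
  field_simp
  ring

lemma hasFDerivAt_whitfield_residual {k : ℕ} (a b w : Fin k → ℂ) (h : ℂ) :
    HasFDerivAt (fun v => (dotc v a - dotc w a / dotc w b * dotc v b + dotc w a - dotc w b * h)
      / dotc w b) (dotcDivDeriv a b w) w := by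
  simp only [div_eq_inv_mul _ (dotc w b)]
  refine ((((hasFDerivAt_dotc a w).sub ((hasFDerivAt_dotc b w).const_mul _)).add_const _).sub_const
    _).const_mul _ |>.congr_fderiv ?_
  ext v
  simp [dotcDivDeriv, div_eq_inv_mul]

lemma whitfield_residual_self {k : ℕ} {a b w : Fin k → ℂ} (hb : dotc w b ≠ 0) (h : ℂ) :
    (dotc w a - dotc w a / dotc w b * dotc w b + dotc w a - dotc w b * h) / dotc w b
      = dotc w a / dotc w b - h := by
  field_simp
  ring

lemma one_div_norm_sq_mul_norm_sq {𝕜 : Type*} [NormedDivisionRing 𝕜] (d x : 𝕜) :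
    1 / ‖d‖ ^ 2 * ‖x‖ ^ 2 = ‖x / d‖ ^ 2 := by
  rw [norm_div, div_pow, one_div_mul_eq_div]

/-- fixed points of Whitfield's iteration are stationary points of
the true rational least-squares error: the Wirtinger derivatives of the
converged Whitfield error and of `E(w) = ∑ i |r(z_i;w) − H(z_i)|²` agree and
both equal the claimed formula. -/
theorem wf_fixed_point_stationary {k M : ℕ} (z H : Fin M → ℂ)
    (p q : ℂ → Fin k → ℂ) (w : Fin k → ℂ)
    (hd : ∀ i, dotc w (q (z i)) ≠ 0) (j : Fin k) :
    wirt (fun v => ∑ i, (1 / ‖dotc w (q (z i))‖ ^ 2)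
        * ‖dotc v (p (z i))
            - (dotc w (p (z i)) / dotc w (q (z i))) * dotc v (q (z i))
            + dotc w (p (z i)) - dotc w (q (z i)) * H i‖ ^ 2) w j
      = wirt (fun v => ∑ i, ‖dotc v (p (z i)) / dotc v (q (z i)) - H i‖ ^ 2) w j
    ∧ wirt (fun v => ∑ i, ‖dotc v (p (z i)) / dotc v (q (z i)) - H i‖ ^ 2) w j
      = ∑ i, (1 / dotc w (q (z i)))
          * (p (z i) j - (dotc w (p (z i)) / dotc w (q (z i))) * q (z i) j)
          * conj (dotc w (p (z i)) / dotc w (q (z i)) - H i) := by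
  have hE := wirt_sum_norm_sq
    (fun i => (hasFDerivAt_dotc_div_dotc (p (z i)) (q (z i)) w (hd i)).sub_const (H i)) j
  have hW := wirt_sum_norm_sq
    (fun i => hasFDerivAt_whitfield_residual (p (z i)) (q (z i)) w (H i)) j
  simp only [one_div_norm_sq_mul_norm_sq, hE, hW, whitfield_residual_self (hd _),
    dotcDivDeriv_single_one, mul_comm (conj _), and_self]
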